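/- arXiv:1602.02330 — 2 statements merged into one kernel-verified Lean document; each statement's English description precedes it below -/
import Mathlib

section
/- Let A be a measurable space, ν a probability measure on A, and κ a Markov kernel from A to ℝ. On a probability space let ξ_1, …, ξ_{N_B} be i.i.d. A-valued random variables with law ν, and let {X_{j,s} : 1 ≤ j ≤ N_B, 1 ≤ s ≤ N_F} be real random variables such that, conditionally on (ξ_1, …, ξ_{N_B}), the X_{j,s} are mutually independent and the conditional law of X_{j,s} is κ(ξ_j, ·). Write E₂X(a) = ∫ x κ(a, dx), E₂X²(a) = ∫ x² κ(a, dx), and E₁E₂X = ∫_A E₂X(a) ν(da). Assume |X_{j,s}| ≤ M₀ almost surely, |E₂X(a)| ≤ M₁ and E₂X²(a) − (E₂X(a))² ≤ σ₂² for ν-almost every a, |E₁E₂X| ≤ M₂, and ∫_A (E₂X(a))² ν(da) − (E₁E₂X)² ≤ σ₁². Then for every t > 0 and every θ ∈ (0,1): P{ (1/(N_B N_F)) Σ_{j=1}^{N_B} Σ_{s=1}^{N_F} X_{j,s} − E₁E₂X > t } ≤ N_B · exp( − ( (1/2)(1−θ)² N_F t² ) / ( σ₂² + (1/3)(M₀+M₁)(1−θ)t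 ) ) + exp( − ( (1/2) θ² N_B t² ) / ( σ₁² + (1/3)(M₁+M₂) θ t ) ). -/
/-!
If the double average exceeds `E₁E₂X` by `t`, then either the average of the fibre means
`m(ξ_j) = E₂X(ξ_j)` exceeds `E₁E₂X` by `θ t`, or for some `j` the average of the `j`-th fibre
exceeds `m(ξ_j)` by `(1 - θ) t`. Given the base points, the fibres are independent samples
from `κ(ξ_j)`, so Bernstein's inequality and a union bound over `j` give the first term; the
`m(ξ_j)` are i.i.d. under `ν`, and Bernstein's inequality gives the second.

Bernstein's inequality itself is the Chernoff bound combined with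
`exp x ≤ 1 + x + x² / (2 (1 - c/3))` for `|x| ≤ c < 3`, which follows from `(n+2)! ≥ 2 · 3ⁿ`.
-/

open MeasureTheory ProbabilityTheory Real

theorem Real.exp_le_one_add_add_sq_div {x c : ℝ} (hx : |x| ≤ c) (hc : c < 3) :
    exp x ≤ 1 + x + x ^ 2 / (2 * (1 - c / 3)) := by
  have hc0 : 0 ≤ c := (abs_nonneg x).trans hx
  have hsum := summable_pow_div_factorial x
  have hgeo : Summable fun n : ℕ => x ^ 2 / 2 * (c / 3) ^ n :=
    (summable_geometric_of_lt_one (by positivity) (by linarith)).mul_left _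
  have hterm (n : ℕ) : x ^ (n + 2) / (n + 2).factorial ≤ x ^ 2 / 2 * (c / 3) ^ n := by
    have hfact : (2 * 3 ^ n : ℝ) ≤ (n + 2).factorial := by
      rw [add_comm n]
      exact_mod_cast Nat.factorial_mul_pow_le_factorial (m := 2) (n := n)
    have hpow : x ^ (n + 2) ≤ x ^ 2 * c ^ n := by
      calc x ^ (n + 2) ≤ |x| ^ (n + 2) := (le_abs_self _).trans (abs_pow x _).le
        _ = x ^ 2 * |x| ^ n := by rw [pow_add, sq_abs, mul_comm]
        _ ≤ x ^ 2 * c ^ n := by gcongr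
    calc x ^ (n + 2) / (n + 2).factorial ≤ x ^ 2 * c ^ n / (2 * 3 ^ n) := by
          gcongr
      _ = x ^ 2 / 2 * (c / 3) ^ n := by rw [div_pow]; ring
  have htail : exp x = 1 + x + ∑' n : ℕ, x ^ (n + 2) / (n + 2).factorial := by
    rw [exp_eq_exp_ℝ, NormedSpace.exp_eq_tsum_div]
    beta_reduce
    rw [hsum.tsum_eq_zero_add,
      ((summable_nat_add_iff 1).2 hsum).tsum_eq_zero_add]
    simp [add_assoc]
  calc exp x ≤ 1 + x + ∑' n : ℕ, x ^ 2 / 2 * (c / 3) ^ n := by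
        rw [htail]
        linarith [((summable_nat_add_iff 2).2 hsum).tsum_le_tsum hterm hgeo]
    _ = 1 + x + x ^ 2 / (2 * (1 - c / 3)) := by
        rw [tsum_mul_left, tsum_geometric_of_lt_one (by positivity) (by linarith)]
        field_simp

section Bernstein

variable {Ω : Type*} [MeasurableSpace Ω] {μ : Measure Ω} [IsProbabilityMeasure μ]

theorem mgf_le_exp_of_abs_le {Z : Ω → ℝ} {b v l : ℝ} (hZ : AEMeasurable Z μ)
    (hbd : ∀ᵐ ω ∂μ, |Z ω| ≤ b) (hmean : μ[Z] = 0) (hvar : Var[Z; μ] ≤ v) (hl : 0 ≤ l)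
    (hlb : l * b < 3) :
    mgf Z μ l ≤ exp (l ^ 2 * v / (2 * (1 - l * b / 3))) := by
  set q := l ^ 2 / (2 * (1 - l * b / 3))
  have hq : 0 ≤ q := div_nonneg (sq_nonneg l) (by linarith)
  have hZint : Integrable Z μ := .of_bound hZ.aestronglyMeasurable b (by simpa using hbd)
  have hZ2int : Integrable (fun ω => Z ω ^ 2) μ :=
    (MemLp.of_bound hZ.aestronglyMeasurable b (by simpa using hbd)).integrable_sq
  have hlin : Integrable (fun ω => 1 + l * Z ω) μ := (integrable_const 1).add (hZint.const_mul l)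
  have hpt : ∀ᵐ ω ∂μ, exp (l * Z ω) ≤ 1 + l * Z ω + q * Z ω ^ 2 := by
    filter_upwards [hbd] with ω hω
    have := exp_le_one_add_add_sq_div (x := l * Z ω) (c := l * b)
      (by rw [abs_mul, abs_of_nonneg hl]; gcongr) hlb
    rwa [mul_pow, mul_div_right_comm] at this
  calc mgf Z μ l ≤ ∫ ω, (1 + l * Z ω + q * Z ω ^ 2) ∂μ :=
        integral_mono_ae (integrable_exp_mul_of_le l b hl hZ (hbd.mono fun _ => le_of_abs_le))
          (hlin.add (hZ2int.const_mul q)) hpt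
    _ = 1 + q * Var[Z; μ] := by
        rw [integral_add hlin (hZ2int.const_mul q),
          integral_add (integrable_const 1) (hZint.const_mul l), integral_const_mul,
          integral_const_mul, variance_of_integral_eq_zero hZ hmean, hmean]
        simp
    _ ≤ 1 + q * v := by gcongr
    _ ≤ exp (l ^ 2 * v / (2 * (1 - l * b / 3))) := by
        rw [mul_div_right_comm]
        linarith [add_one_le_exp (q * v)]

theorem measureReal_sum_gt_le_bernstein {ι : Type*} [Fintype ι] {Z : ι → Ω → ℝ}
    (hind : iIndepFun Z μ) (hmeas : ∀ i, Measurable (Z i)) {b v t : ℝ} (ht : 0 < t)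
    (hbd : ∀ i, ∀ᵐ ω ∂μ, |Z i ω| ≤ b) (hmean : ∀ i, μ[Z i] = 0) (hvar : ∀ i, Var[Z i; μ] ≤ v) :
    μ.real {ω | Fintype.card ι * t < ∑ i, Z i ω} ≤
      exp (-(Fintype.card ι * t ^ 2 / 2 / (v + b * t / 3))) := by
  set n : ℝ := (Fintype.card ι : ℝ)
  rcases isEmpty_or_nonempty ι with hι | ⟨⟨i₀⟩⟩
  · simp [n]
  have hb : 0 ≤ b := (hbd i₀).exists.elim fun _ hω => (abs_nonneg _).trans hω
  rcases (variance_nonneg (Z i₀) μ |>.trans (hvar i₀)).eq_or_lt with rfl | hv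
  · -- With zero variance every `Z i` vanishes almost surely, so the event is null.
    have hzero : ∀ᵐ ω ∂μ, ∀ i, Z i ω = 0 := by
      refine ae_all_iff.2 fun i => ?_
      have hLp : MemLp (Z i) 2 μ :=
        .of_bound (hmeas i).aestronglyMeasurable b (by simpa using hbd i)
      filter_upwards [ae_eq_integral_of_variance_eq_zero hLp
        ((hvar i).antisymm (variance_nonneg _ _))] with ω hω
      rw [hω, hmean i]
    have hnull : μ {ω | n * t < ∑ i, Z i ω} = 0 := by
      refine measure_mono_null ?_ (ae_iff.1 hzero)
      intro ω hω hall
      simp only [Set.mem_ofPred_eq, hall, Finset.sum_const_zero] at hω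
      exact (mul_nonneg (Nat.cast_nonneg _) ht.le).not_gt hω
    simp only [measureReal_def, hnull, ENNReal.toReal_zero]
    positivity
  set D := v + b * t / 3
  have hD : 0 < D := by positivity
  set l := t / D
  have hl : 0 < l := div_pos ht hD
  have hlb : l * b < 3 := by
    rw [div_mul_eq_mul_div, div_lt_iff₀ hD]
    simp only [D]
    linarith
  have hint : ∀ i, Integrable (fun ω => exp (l * Z i ω)) μ := fun i =>
    integrable_exp_mul_of_le l b hl.le (hmeas i).aemeasurable ((hbd i).mono fun _ => le_of_abs_le)
  calc μ.real {ω | n * t < ∑ i, Z i ω} ≤ μ.real {ω | n * t ≤ (∑ i, Z i) ω} :=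
        measureReal_mono fun ω hω => by simpa [Finset.sum_apply] using hω.le
    _ ≤ exp (-l * (n * t)) * mgf (∑ i, Z i) μ l :=
        measure_ge_le_exp_mul_mgf _ hl.le (hind.integrable_exp_mul_sum hmeas fun i _ => hint i)
    _ = exp (-l * (n * t)) * ∏ i, mgf (Z i) μ l := by rw [hind.mgf_sum hmeas]
    _ ≤ exp (-l * (n * t)) * ∏ _i : ι, exp (l ^ 2 * v / (2 * (1 - l * b / 3))) := by
        gcongr with i
        · exact fun i _ => mgf_nonneg
        · exact mgf_le_exp_of_abs_le (hmeas i).aemeasurable (hbd i) (hmean i) (hvar i) hl.le hlb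
    _ = exp (-(n * t ^ 2 / 2 / D)) := by
        rw [Finset.prod_const, Finset.card_univ, ← exp_nat_mul, ← exp_add]
        congr 1
        have h1 : 1 - l * b / 3 = v / D := by
          simp only [l, D]
          field_simp
          ring
        rw [h1]
        simp only [l]
        field_simp
        ring

end Bernstein

theorem measureReal_pi_sum_sub_integral_gt_le_bernstein {ι ι' β : Type*} [Fintype ι] [Fintype ι']
    [MeasurableSpace β] {μ : ι → Measure β} [∀ i, IsProbabilityMeasure (μ i)]
    {ρ : Measure β} [IsProbabilityMeasure ρ] {g : ι' → ι} (hg : g.Injective)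
    (hμg : ∀ k, μ (g k) = ρ) {f : β → ℝ} (hf : Measurable f) {b v t : ℝ} (ht : 0 < t)
    (hbd : ∀ᵐ y ∂ρ, |f y - ρ[f]| ≤ b) (hvar : Var[f; ρ] ≤ v) :
    (Measure.pi μ).real {x | Fintype.card ι' * t < ∑ k, (f (x (g k)) - ρ[f])} ≤
      exp (-(Fintype.card ι' * t ^ 2 / 2 / (v + b * t / 3))) := by
  have hpres (k : ι') : MeasurePreserving (fun x : ι → β => x (g k)) (Measure.pi μ) ρ :=
    hμg k ▸ measurePreserving_eval μ (g k)
  have hfc : Measurable fun y => f y - ρ[f] := hf.sub_const _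
  refine measureReal_sum_gt_le_bernstein ?_ (fun k => hfc.comp (measurable_pi_apply (g k))) ht
    (fun k => (hpres k).quasiMeasurePreserving.ae hbd) (fun k => ?_) (fun k => ?_)
  · exact ((iIndepFun_pi fun i => aemeasurable_id).precomp hg).comp _ fun _ => hfc
  · change ∫ x, f (x (g k)) - ρ[f] ∂Measure.pi μ = 0
    rw [← integral_map (hpres k).measurable.aemeasurable hfc.aestronglyMeasurable,
      (hpres k).map_eq]
    by_cases hfi : Integrable f ρ
    · simp [integral_sub hfi (integrable_const _)]
    · simp [integral_undef hfi]
  · change Var[fun x => f (x (g k)) - ρ[f]; Measure.pi μ] ≤ v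
    rw [(hpres k).variance_fun_comp hfc.aemeasurable, variance_sub_const hf.aestronglyMeasurable]
    exact hvar

theorem measurable_measure_pi {γ ι : Type*} [Fintype ι] {β : ι → Type*} [MeasurableSpace γ]
    [∀ i, MeasurableSpace (β i)] {μ : γ → (i : ι) → Measure (β i)}
    [∀ c i, IsProbabilityMeasure (μ c i)] (hμ : ∀ i, Measurable fun c => μ c i) :
    Measurable fun c => Measure.pi (μ c) := by
  refine .measure_of_isPiSystem_of_isProbabilityMeasure generateFrom_pi.symm isPiSystem_pi ?_
  rintro _ ⟨s, hs, rfl⟩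
  simp_rw [Measure.pi_pi]
  exact Finset.measurable_prod _ fun i _ => (Measure.measurable_coe (hs i trivial)).comp (hμ i)

theorem measure_snd_preimage_eq_lintegral_of_map_eq_bind {Ω α β : Type*} [MeasurableSpace Ω]
    [MeasurableSpace α] [MeasurableSpace β] {P : Measure Ω} {μ : Measure α} [NeZero μ]
    {K : α → Measure β} [∀ a, IsProbabilityMeasure (K a)] (hK : Measurable K) {T : Ω → α × β}
    (hT : P.map T = μ.bind fun a => (K a).map (Prod.mk a)) {S : Set β} (hS : MeasurableSet S) :
    P ((fun ω => (T ω).2) ⁻¹' S) = ∫⁻ a, K a S ∂μ := by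
  have : IsMarkovKernel (⟨K, hK⟩ : Kernel α β) :=
    ⟨fun a => inferInstanceAs (IsProbabilityMeasure (K a))⟩
  have hmk : Measurable fun a => (K a).map (Prod.mk a) := by
    refine Measure.measurable_of_measurable_coe _ fun s hs => ?_
    simp_rw [Measure.map_apply measurable_prodMk_left hs]
    exact Kernel.measurable_kernel_prodMk_left (κ := ⟨K, hK⟩) hs
  have hbind (s : Set (α × β)) (hs : MeasurableSet s) :
      (μ.bind fun a => (K a).map (Prod.mk a)) s = ∫⁻ a, K a (Prod.mk a ⁻¹' s) ∂μ := by
    simp_rw [Measure.bind_apply hs hmk.aemeasurable, Measure.map_apply measurable_prodMk_left hs]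
  -- Otherwise `P.map T = 0`, while the right-hand side of `hT` has mass `μ univ ≠ 0`.
  have hTm : AEMeasurable T P := by
    by_contra h
    have := congrArg (· Set.univ) hT
    simp only [Measure.map_of_not_aemeasurable h, Measure.coe_zero, Pi.zero_apply,
      hbind _ MeasurableSet.univ, Set.preimage_univ, measure_univ, lintegral_const, one_mul] at this
    exact NeZero.ne μ (Measure.measure_univ_eq_zero.1 this.symm)
  have hS' : MeasurableSet (Prod.snd ⁻¹' S : Set (α × β)) := measurable_snd hS
  change P (T ⁻¹' (Prod.snd ⁻¹' S)) = _
  rw [← Measure.map_apply_of_aemeasurable hTm hS', hT, hbind _ hS']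
  rfl

theorem lt_sum_sub_or_exists_lt_sum_sub_of_avg_sub_gt {n k : ℕ} (hn : 0 < n) (hk : 0 < k)
    (x : Fin n → Fin k → ℝ) (m : Fin n → ℝ) {C u₁ u₂ : ℝ}
    (h : 1 / ((n : ℝ) * k) * ∑ j, ∑ s, x j s - C > u₁ + u₂) :
    n * u₁ < ∑ j, (m j - C) ∨ ∃ j, k * u₂ < ∑ s, (x j s - m j) := by
  by_contra! hle
  have hsplit : ∑ j, ∑ s, x j s = ∑ j, ∑ s, (x j s - m j) + k * ∑ j, (m j - C) + n * k * C := by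
    simp only [Finset.sum_sub_distrib, Finset.sum_const, Finset.card_univ, Fintype.card_fin,
      nsmul_eq_mul]
    rw [← Finset.mul_sum]
    ring
  have hfibres : ∑ j, ∑ s, (x j s - m j) ≤ n * (k * u₂) :=
    (Finset.sum_le_sum fun j _ => hle.2 j).trans_eq (by simp)
  have hnk : (0 : ℝ) < n * k := by positivity
  rw [gt_iff_lt, lt_sub_iff_add_lt, one_div_mul_eq_div, lt_div_iff₀ hnk] at h
  nlinarith [hle.1]

theorem lintegral_pi_kernel_preimage_eval {A β ι ι' : Type*} [MeasurableSpace A]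
    [MeasurableSpace β] [Fintype ι] [Fintype ι'] (ν : Measure A) [IsProbabilityMeasure ν]
    (κ : Kernel A β) [IsMarkovKernel κ] (p : ι × ι') {B : Set β} (hB : MeasurableSet B) :
    ∫⁻ a, Measure.pi (fun q : ι × ι' => κ (a q.1)) (Function.eval p ⁻¹' B)
        ∂Measure.pi (fun _ : ι => ν) = ∫⁻ b, κ b B ∂ν := by
  have hfibre (a : ι → A) :
      Measure.pi (fun q : ι × ι' => κ (a q.1)) (Function.eval p ⁻¹' B) = κ (a p.1) B :=
    (measurePreserving_eval _ p).measure_preimage hB.nullMeasurableSet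
  simp_rw [hfibre]
  exact (measurePreserving_eval (fun _ : ι => ν) p.1).lintegral_comp (κ.measurable_coe hB)

theorem ae_ae_of_ae_observation {Ω A β ι ι' : Type*} [MeasurableSpace Ω] [MeasurableSpace A]
    [MeasurableSpace β] [Fintype ι] [Fintype ι'] {P : Measure Ω} {ν : Measure A}
    [IsProbabilityMeasure ν] {κ : Kernel A β} [IsMarkovKernel κ] {Y : Ω → ι × ι' → β}
    (hY : ∀ S, MeasurableSet S → P (Y ⁻¹' S) =
      ∫⁻ a, Measure.pi (fun q : ι × ι' => κ (a q.1)) S ∂Measure.pi (fun _ : ι => ν))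
    (p : ι × ι') {q : β → Prop} (hq : MeasurableSet {y | q y}) (h : ∀ᵐ ω ∂P, q (Y ω p)) :
    ∀ᵐ b ∂ν, ∀ᵐ y ∂κ b, q y := by
  have h0 := hY _ (measurable_pi_apply p hq.compl)
  rw [lintegral_pi_kernel_preimage_eval ν κ p hq.compl] at h0
  filter_upwards [(lintegral_eq_zero_iff (κ.measurable_coe hq.compl)).1 (h0 ▸ ae_iff.1 h)]
    with b hb
  exact ae_iff.2 hb

theorem lintegral_pi_kernel_avg_sub_gt_le {A : Type*} [MeasurableSpace A] {ν : Measure A}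
    [IsProbabilityMeasure ν] {κ : Kernel A ℝ} [IsMarkovKernel κ] {n k : ℕ} (hn : 0 < n)
    (hk : 0 < k) {M₀ M₁ M₂ σ₁ σ₂ u₁ u₂ : ℝ} (hM₀ : ∀ᵐ b ∂ν, ∀ᵐ y ∂κ b, |y| ≤ M₀)
    (hM₁ : ∀ᵐ b ∂ν, |∫ y, y ∂κ b| ≤ M₁)
    (hσ₂ : ∀ᵐ b ∂ν, (∫ y, y ^ 2 ∂κ b) - (∫ y, y ∂κ b) ^ 2 ≤ σ₂ ^ 2)
    (hM₂ : |∫ b, (∫ y, y ∂κ b) ∂ν| ≤ M₂)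
    (hσ₁ : (∫ b, (∫ y, y ∂κ b) ^ 2 ∂ν) - (∫ b, (∫ y, y ∂κ b) ∂ν) ^ 2 ≤ σ₁ ^ 2)
    {t : ℝ} (hu₁ : 0 < u₁) (hu₂ : 0 < u₂) (hu : u₁ + u₂ = t) :
    ∫⁻ a, Measure.pi (fun p : Fin n × Fin k => κ (a p.1))
        {x | 1 / ((n : ℝ) * k) * ∑ j, ∑ s, x (j, s) - ∫ b, (∫ y, y ∂κ b) ∂ν > t}
        ∂Measure.pi (fun _ : Fin n => ν)
      ≤ n * ENNReal.ofReal (exp (-(k * u₂ ^ 2 / 2 / (σ₂ ^ 2 + (M₀ + M₁) * u₂ / 3))))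
        + ENNReal.ofReal (exp (-(n * u₁ ^ 2 / 2 / (σ₁ ^ 2 + (M₁ + M₂) * u₁ / 3)))) := by
  subst hu
  set m : A → ℝ := fun b => ∫ y, y ∂κ b
  set C := ∫ b, m b ∂ν
  set K := fun a : Fin n → A => Measure.pi fun p : Fin n × Fin k => κ (a p.1)
  set B₂ := exp (-(k * u₂ ^ 2 / 2 / (σ₂ ^ 2 + (M₀ + M₁) * u₂ / 3)))
  set B₁ := exp (-(n * u₁ ^ 2 / 2 / (σ₁ ^ 2 + (M₁ + M₂) * u₁ / 3)))
  have hm : Measurable m := (stronglyMeasurable_id.integral_kernel (κ := κ)).measurable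
  set H := {a : Fin n → A | n * u₁ < ∑ j, (m (a j) - C)}
  have hH : MeasurableSet H := measurableSet_lt measurable_const <|
    Finset.measurable_sum _ fun j _ => (hm.comp (measurable_pi_apply j)).sub_const _
  have hfibre : ∀ᵐ a ∂Measure.pi (fun _ : Fin n => ν), ∀ j,
      K a {x | k * u₂ < ∑ s, (x (j, s) - m (a j))} ≤ ENNReal.ofReal B₂ := by
    refine ae_all_iff.2 fun j => ?_
    filter_upwards [(Measure.tendsto_eval_ae_ae (i := j)).eventually ((hM₀.and hM₁).and hσ₂)]
      with a ⟨⟨hbd, hmean⟩, hvar⟩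
    have hLp : MemLp id 2 (κ (a j)) := .of_bound aestronglyMeasurable_id M₀ (by simpa using hbd)
    have := measureReal_pi_sum_sub_integral_gt_le_bernstein
      (μ := fun p : Fin n × Fin k => κ (a p.1)) (Prod.mk_right_injective j) (fun _ => rfl) measurable_id hu₂ (b := M₀ + M₁)
      (hbd.mono fun y hy => (abs_sub _ _).trans (add_le_add hy hmean))
      ((variance_eq_sub hLp).trans_le hvar)
    rw [Fintype.card_fin] at this
    rw [← ofReal_measureReal]
    exact ENNReal.ofReal_le_ofReal this
  have hbase : Measure.pi (fun _ : Fin n => ν) H ≤ ENNReal.ofReal B₁ := by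
    have hLp : MemLp m 2 ν := .of_bound hm.aestronglyMeasurable M₁ (by simpa using hM₁)
    have := measureReal_pi_sum_sub_integral_gt_le_bernstein (μ := fun _ : Fin n => ν)
      Function.injective_id (fun _ => rfl) hm hu₁ (b := M₁ + M₂)
      (hM₁.mono fun b hb => (abs_sub _ _).trans (add_le_add hb hM₂))
      ((variance_eq_sub hLp).trans_le hσ₁)
    rw [Fintype.card_fin] at this
    rw [← ofReal_measureReal]
    exact ENNReal.ofReal_le_ofReal this
  have hcover (a : Fin n → A) :
      K a {x | 1 / ((n : ℝ) * k) * ∑ j, ∑ s, x (j, s) - C > u₁ + u₂}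
        ≤ ∑ j, K a {x | k * u₂ < ∑ s, (x (j, s) - m (a j))} + H.indicator 1 a := by
    by_cases ha : a ∈ H
    · simpa [ha] using prob_le_one.trans le_add_self
    · rw [Set.indicator_of_notMem ha, add_zero]
      refine (measure_mono fun x hx => ?_).trans (measure_iUnion_fintype_le _ _)
      obtain hbase | ⟨j, hj⟩ :=
        lt_sum_sub_or_exists_lt_sum_sub_of_avg_sub_gt hn hk (fun j s => x (j, s)) (m ∘ a) hx
      exacts [absurd hbase ha, Set.mem_iUnion.2 ⟨j, hj⟩]
  calc _ ≤ ∫⁻ a, (n * ENNReal.ofReal B₂ + H.indicator 1 a) ∂Measure.pi (fun _ : Fin n => ν) := by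
        refine lintegral_mono_ae (hfibre.mono fun a ha => (hcover a).trans ?_)
        gcongr
        exact (Finset.sum_le_sum fun j _ => ha j).trans_eq (by simp)
    _ = n * ENNReal.ofReal B₂ + Measure.pi (fun _ : Fin n => ν) H := by
        rw [lintegral_add_left measurable_const, lintegral_const, measure_univ, mul_one,
          lintegral_indicator_one hH]
    _ ≤ _ := by gcongr

theorem stmt0_general
    {Ω : Type*} [MeasurableSpace Ω] (P : Measure Ω)
    {A : Type*} [MeasurableSpace A] (ν : Measure A) [IsProbabilityMeasure ν]
    (κ : Kernel A ℝ) [IsMarkovKernel κ]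
    (NB NF : ℕ) (hNB : 0 < NB) (hNF : 0 < NF)
    (ξ : Fin NB → Ω → A) (X : Fin NB → Fin NF → Ω → ℝ)
    (hlaw : P.map (fun ω => ((fun j => ξ j ω), fun p : Fin NB × Fin NF => X p.1 p.2 ω))
      = (Measure.pi fun _ : Fin NB => ν).bind fun a =>
          Measure.map (fun x => (a, x)) (Measure.pi fun p : Fin NB × Fin NF => κ (a p.1)))
    (M₀ M₁ M₂ σ₁ σ₂ : ℝ)
    (hM₀ : ∀ j s, ∀ᵐ ω ∂P, |X j s ω| ≤ M₀)
    (hM₁ : ∀ᵐ a ∂ν, |∫ x, x ∂(κ a)| ≤ M₁)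
    (hσ₂ : ∀ᵐ a ∂ν, (∫ x, x ^ 2 ∂(κ a)) - (∫ x, x ∂(κ a)) ^ 2 ≤ σ₂ ^ 2)
    (hM₂ : |∫ a, (∫ x, x ∂(κ a)) ∂ν| ≤ M₂)
    (hσ₁ : (∫ a, (∫ x, x ∂(κ a)) ^ 2 ∂ν) - (∫ a, (∫ x, x ∂(κ a)) ∂ν) ^ 2 ≤ σ₁ ^ 2)
    (t : ℝ) (ht : 0 < t) (θ : ℝ) (hθ : θ ∈ Set.Ioo (0 : ℝ) 1) :
    (P {ω | (1 / ((NB : ℝ) * (NF : ℝ))) * ∑ j, ∑ s, X j s ω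
          - ∫ a, (∫ x, x ∂(κ a)) ∂ν > t}).toReal
      ≤ (NB : ℝ) * Real.exp
            (-((1 / 2 * (1 - θ) ^ 2 * (NF : ℝ) * t ^ 2)
              / (σ₂ ^ 2 + 1 / 3 * (M₀ + M₁) * (1 - θ) * t)))
        + Real.exp
            (-((1 / 2 * θ ^ 2 * (NB : ℝ) * t ^ 2)
              / (σ₁ ^ 2 + 1 / 3 * (M₁ + M₂) * θ * t))) := by
  obtain ⟨hθ0, hθ1⟩ := hθ
  have hK : Measurable fun a : Fin NB → A => Measure.pi fun p : Fin NB × Fin NF => κ (a p.1) :=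
    measurable_measure_pi fun p => κ.measurable.comp (measurable_pi_apply p.1)
  have hobs {S : Set (Fin NB × Fin NF → ℝ)} (hS : MeasurableSet S) :=
    measure_snd_preimage_eq_lintegral_of_map_eq_bind hK hlaw hS
  have hM₀' : ∀ᵐ b ∂ν, ∀ᵐ y ∂κ b, |y| ≤ M₀ :=
    ae_ae_of_ae_observation (fun _ hS => hobs hS) (⟨0, hNB⟩, ⟨0, hNF⟩)
      (q := fun y => |y| ≤ M₀) (measurableSet_le measurable_abs measurable_const) (hM₀ _ _)
  have hE : MeasurableSet {x : Fin NB × Fin NF → ℝ |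
      1 / ((NB : ℝ) * NF) * ∑ j, ∑ s, x (j, s) - ∫ a, (∫ x, x ∂(κ a)) ∂ν > t} :=
    measurableSet_lt measurable_const (by fun_prop)
  calc _ = (∫⁻ a, _ ∂Measure.pi fun _ : Fin NB => ν).toReal := congrArg ENNReal.toReal (hobs hE)
    _ ≤ _ := ENNReal.toReal_mono (by finiteness) <| lintegral_pi_kernel_avg_sub_gt_le hNB hNF hM₀'
        hM₁ hσ₂ hM₂ hσ₁ (mul_pos hθ0 ht) (mul_pos (sub_pos.2 hθ1) ht) (by ring)
    _ = _ := by
        rw [ENNReal.toReal_add (by finiteness) ENNReal.ofReal_ne_top, ENNReal.toReal_mul,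
          ENNReal.toReal_natCast, ENNReal.toReal_ofReal (exp_nonneg _),
          ENNReal.toReal_ofReal (exp_nonneg _)]
        ring_nf

/-- Large deviation bound for two-step ("Procrustean") hierarchical sampling: `N_B` base
points `ξ_j` are drawn i.i.d. from `ν` on `A`, and for each `j`, `N_F` conditionally
i.i.d. real observations `X_{j,s}` are drawn from the Markov kernel `κ (ξ_j)`, all fibres
being conditionally independent (this is encoded by the joint law hypothesis `hlaw`).
Then the deviation of the double empirical average from the double mean `∫∫ x κ(a,dx) ν(da)`
satisfies a Bernstein-type bound combining a fibrewise term and a base term. -/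
theorem stmt0
    {Ω : Type*} [MeasurableSpace Ω] (P : Measure Ω) [IsProbabilityMeasure P]
    {A : Type*} [MeasurableSpace A] (ν : Measure A) [IsProbabilityMeasure ν]
    (κ : Kernel A ℝ) [IsMarkovKernel κ]
    (NB NF : ℕ) (hNB : 0 < NB) (hNF : 0 < NF)
    (ξ : Fin NB → Ω → A) (X : Fin NB → Fin NF → Ω → ℝ)
    (hlaw : P.map (fun ω => ((fun j => ξ j ω), fun p : Fin NB × Fin NF => X p.1 p.2 ω))
      = (Measure.pi fun _ : Fin NB => ν).bind fun a =>
          Measure.map (fun x => (a, x)) (Measure.pi fun p : Fin NB × Fin NF => κ (a p.1)))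
    (M₀ M₁ M₂ σ₁ σ₂ : ℝ)
    (hM₀ : ∀ j s, ∀ᵐ ω ∂P, |X j s ω| ≤ M₀)
    (hM₁ : ∀ᵐ a ∂ν, |∫ x, x ∂(κ a)| ≤ M₁)
    (hσ₂ : ∀ᵐ a ∂ν, (∫ x, x ^ 2 ∂(κ a)) - (∫ x, x ∂(κ a)) ^ 2 ≤ σ₂ ^ 2)
    (hM₂ : |∫ a, (∫ x, x ∂(κ a)) ∂ν| ≤ M₂)
    (hσ₁ : (∫ a, (∫ x, x ∂(κ a)) ^ 2 ∂ν) - (∫ a, (∫ x, x ∂(κ a)) ∂ν) ^ 2 ≤ σ₁ ^ 2)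
    (t : ℝ) (ht : 0 < t) (θ : ℝ) (hθ : θ ∈ Set.Ioo (0 : ℝ) 1) :
    (P {ω | (1 / ((NB : ℝ) * (NF : ℝ))) * ∑ j, ∑ s, X j s ω
          - ∫ a, (∫ x, x ∂(κ a)) ∂ν > t}).toReal
      ≤ (NB : ℝ) * Real.exp
            (-((1 / 2 * (1 - θ) ^ 2 * (NF : ℝ) * t ^ 2)
              / (σ₂ ^ 2 + 1 / 3 * (M₀ + M₁) * (1 - θ) * t)))
        + Real.exp
            (-((1 / 2 * θ ^ 2 * (NB : ℝ) * t ^ 2)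
              / (σ₁ ^ 2 + 1 / 3 * (M₁ + M₂) * θ * t))) :=
  stmt0_general P ν κ NB NF hNB hNF ξ X hlaw M₀ M₁ M₂ σ₁ σ₂ hM₀ hM₁ hσ₂ hM₂ hσ₁ t ht θ hθ
end

section
/- Let κ₁, …, κ_n be positive integers with κ = κ₁ + ⋯ + κ_n, and partition the index set {1, …, κ} into consecutive blocks of sizes κ₁, …, κ_n. Let L be a real symmetric κ×κ matrix with spectral decomposition L = Σ_{l=0}^{κ−1} λ_l v_l v_lᵀ, where {v_0, …, v_{κ−1}} is an orthonormal basis of ℝ^κ and all λ_l ≥ 0. For a column vector v ∈ ℝ^κ write v_{[j]} ∈ ℝ^{κ_j} for its j-th segment, and for a κ×κ matrix M write M_{ij} for its (i,j)-th block (the κ_i × κ_j submatrix with rows in block i and columns in block j). For a positive integer t, define the horizontal base diffusion map V^t(j) ∈ ℝ^{κ²} by V^t(j) = ( λ_l^{t/2} λ_m^{t/2} ⟨v_{l[j]}, v_{m[j]}⟩ )_{0 ≤ l,m ≤ κ−1}. Then for all 1 ≤ i, j ≤ n: (i) the (i,j)-th block of L^t equals Σ_{l=0}^{κ−1} λ_l^t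 v_{l[i]} v_{l[j]}ᵀ, and (ii) the squared Frobenius norm of this block satisfies ‖(L^t)_{ij}‖_F² = Σ_{l,m=0}^{κ−1} λ_l^t λ_m^t ⟨v_{m[i]}, v_{l[i]}⟩ ⟨v_{l[j]}, v_{m[j]}⟩ = ⟨V^t(i), V^t(j)⟩, where ⟨·,·⟩ on the right is the standard Euclidean inner product on ℝ^{κ²}. -/
/-!
Orthonormality of the eigenvectors makes `vecMulVec (v l) (v l) * vecMulVec (v m) (v m)` vanish
for `l ≠ m` and idempotent for `l = m`, so `L ^ t = ∑ l, λ_l ^ t • v_l v_lᵀ` and every entry of a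
block of `L ^ t` is read off from the segments of the eigenvectors. Squaring and summing an entry
of the form `∑ l, c_l x_l(r) y_l(s)` gives `∑ l m, c_l c_m ⟨x_m, x_l⟩ ⟨y_l, y_m⟩`, and for `λ ≥ 0`
the factor `λ_l ^ t λ_m ^ t` splits as the product of the weights `λ_l ^ (t/2) λ_m ^ (t/2)` of
`V^t(i)` and `V^t(j)`.
-/

open Matrix

namespace Matrix

variable {R ι α : Type*} [CommRing R] [Fintype ι]

theorem sum_smul_vecMulVec_apply {β : Type*} (c : ι → R) (x : ι → α → R) (y : ι → β → R)
    (a : α) (b : β) :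
    (∑ l, c l • vecMulVec (x l) (y l)) a b = ∑ l, c l * x l a * y l b := by
  simp [sum_apply, vecMulVec_apply, mul_assoc]

variable [DecidableEq ι] [Fintype α] {v : ι → α → R}

theorem sum_smul_vecMulVec_mul_sum_smul_vecMulVec (c d : ι → R)
    (hv : ∀ l m, v l ⬝ᵥ v m = if l = m then 1 else 0) :
    (∑ l, c l • vecMulVec (v l) (v l)) * (∑ l, d l • vecMulVec (v l) (v l))
      = ∑ l, (c l * d l) • vecMulVec (v l) (v l) := by
  simp_rw [Finset.sum_mul_sum, smul_mul_smul_comm, vecMulVec_mul_vecMulVec, hv, ite_smul,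
    one_smul, zero_smul]
  simp [apply_ite]

theorem sum_smul_vecMulVec_pow [DecidableEq α] (c : ι → R)
    (hv : ∀ l m, v l ⬝ᵥ v m = if l = m then 1 else 0) {t : ℕ} (ht : 0 < t) :
    (∑ l, c l • vecMulVec (v l) (v l)) ^ t = ∑ l, c l ^ t • vecMulVec (v l) (v l) := by
  induction t, ht using Nat.le_induction with
  | base => simp
  | succ t _ ih => simp_rw [pow_succ, ih, sum_smul_vecMulVec_mul_sum_smul_vecMulVec _ _ hv]

end Matrix

theorem Finset.sum_sum_sq_sum_mul_mul {R ι α β : Type*} [CommRing R] [Fintype ι] [Fintype α]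
    [Fintype β] (c : ι → R) (x : ι → α → R) (y : ι → β → R) :
    ∑ a, ∑ b, (∑ l, c l * x l a * y l b) ^ 2
      = ∑ l, ∑ m, c l * c m * (∑ a, x m a * x l a) * (∑ b, y l b * y m b) := by
  have expand : ∀ l m, c l * c m * (∑ a, x m a * x l a) * (∑ b, y l b * y m b)
      = ∑ a, ∑ b, (c l * x l a * y l b) * (c m * x m a * y m b) := by
    intro l m
    rw [mul_assoc, Finset.sum_mul_sum, Finset.mul_sum]
    simp_rw [Finset.mul_sum]
    exact Finset.sum_congr rfl fun a _ => Finset.sum_congr rfl fun b _ => by ring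
  simp_rw [expand, sq, Finset.sum_mul_sum]
  rw [Finset.sum_comm_cycle]
  exact Finset.sum_congr rfl fun l _ => Finset.sum_comm_cycle

theorem Real.rpow_natCast_div_two_mul_self {x : ℝ} (hx : 0 ≤ x) (t : ℕ) :
    x ^ ((t : ℝ) / 2) * x ^ ((t : ℝ) / 2) = x ^ t := by
  rw [← sq, ← Real.rpow_natCast (x ^ _), ← Real.rpow_mul hx]
  norm_num

theorem stmt2_general (n : ℕ) (κ : Fin n → ℕ)
    (N : ℕ)
    (L : Matrix ((j : Fin n) × Fin (κ j)) ((j : Fin n) × Fin (κ j)) ℝ)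
    (lam : Fin N → ℝ) (hlam : ∀ l, 0 ≤ lam l)
    (v : Fin N → ((j : Fin n) × Fin (κ j)) → ℝ)
    (hortho : ∀ l m, dotProduct (v l) (v m) = if l = m then (1 : ℝ) else 0)
    (hspec : L = ∑ l, lam l • vecMulVec (v l) (v l))
    (t : ℕ) (ht : 0 < t)
    (V : Fin n → (Fin N × Fin N) → ℝ)
    (hV : ∀ j lm, V j lm
      = lam lm.1 ^ ((t : ℝ) / 2) * lam lm.2 ^ ((t : ℝ) / 2)
          * ∑ s : Fin (κ j), v lm.1 ⟨j, s⟩ * v lm.2 ⟨j, s⟩) :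
    ∀ i j : Fin n,
      (∀ (r : Fin (κ i)) (s : Fin (κ j)),
        (L ^ t) ⟨i, r⟩ ⟨j, s⟩ = ∑ l, lam l ^ t * v l ⟨i, r⟩ * v l ⟨j, s⟩) ∧
      (∑ r : Fin (κ i), ∑ s : Fin (κ j), ((L ^ t) ⟨i, r⟩ ⟨j, s⟩) ^ 2
        = ∑ l, ∑ m, lam l ^ t * lam m ^ t
            * (∑ r : Fin (κ i), v m ⟨i, r⟩ * v l ⟨i, r⟩)
            * (∑ s : Fin (κ j), v l ⟨j, s⟩ * v m ⟨j, s⟩)) ∧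
      (∑ r : Fin (κ i), ∑ s : Fin (κ j), ((L ^ t) ⟨i, r⟩ ⟨j, s⟩) ^ 2
        = ∑ lm : Fin N × Fin N, V i lm * V j lm) := by
  intro i j
  have block : ∀ (r : Fin (κ i)) (s : Fin (κ j)),
      (L ^ t) ⟨i, r⟩ ⟨j, s⟩ = ∑ l, lam l ^ t * v l ⟨i, r⟩ * v l ⟨j, s⟩ := by
    intro r s
    rw [hspec, sum_smul_vecMulVec_pow _ hortho ht, sum_smul_vecMulVec_apply]
  have frobenius : ∑ r : Fin (κ i), ∑ s : Fin (κ j), ((L ^ t) ⟨i, r⟩ ⟨j, s⟩) ^ 2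
      = ∑ l, ∑ m, lam l ^ t * lam m ^ t
          * (∑ r : Fin (κ i), v m ⟨i, r⟩ * v l ⟨i, r⟩)
          * (∑ s : Fin (κ j), v l ⟨j, s⟩ * v m ⟨j, s⟩) := by
    simp_rw [block]
    exact Finset.sum_sum_sq_sum_mul_mul _ (fun l r => v l ⟨i, r⟩) (fun l s => v l ⟨j, s⟩)
  refine ⟨block, frobenius, ?_⟩
  rw [frobenius, Fintype.sum_prod_type]
  refine Finset.sum_congr rfl fun l _ => Finset.sum_congr rfl fun m _ => ?_
  rw [hV, hV, ← Real.rpow_natCast_div_two_mul_self (hlam l),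
    ← Real.rpow_natCast_div_two_mul_self (hlam m)]
  simp_rw [mul_comm (v m _) (v l _)]
  ring

/-- Block structure of powers of a positive-semidefinite matrix given by a spectral
decomposition, and the resulting horizontal-base-diffusion-map inner product identity.
The index set `{1,…,κ}` (with `κ = κ₁ + ⋯ + κₙ`) is partitioned into `n` blocks,
modelled by the sigma type `(j : Fin n) × Fin (κ j)`; `v l ⟨j, s⟩` is the `s`-th entry
of the `j`-th segment `v_{l[j]}` of the eigenvector `v l`. -/
theorem stmt2 (n : ℕ) (hn : 0 < n) (κ : Fin n → ℕ) (hκ : ∀ j, 0 < κ j)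
    (N : ℕ) (hN : N = ∑ j, κ j)
    (L : Matrix ((j : Fin n) × Fin (κ j)) ((j : Fin n) × Fin (κ j)) ℝ)
    (lam : Fin N → ℝ) (hlam : ∀ l, 0 ≤ lam l)
    (v : Fin N → ((j : Fin n) × Fin (κ j)) → ℝ)
    (hortho : ∀ l m, dotProduct (v l) (v m) = if l = m then (1 : ℝ) else 0)
    (hspec : L = ∑ l, lam l • vecMulVec (v l) (v l))
    (t : ℕ) (ht : 0 < t)
    (V : Fin n → (Fin N × Fin N) → ℝ)
    (hV : ∀ j lm, V j lm
      = lam lm.1 ^ ((t : ℝ) / 2) * lam lm.2 ^ ((t : ℝ) / 2)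
          * ∑ s : Fin (κ j), v lm.1 ⟨j, s⟩ * v lm.2 ⟨j, s⟩) :
    ∀ i j : Fin n,
      (∀ (r : Fin (κ i)) (s : Fin (κ j)),
        (L ^ t) ⟨i, r⟩ ⟨j, s⟩ = ∑ l, lam l ^ t * v l ⟨i, r⟩ * v l ⟨j, s⟩) ∧
      (∑ r : Fin (κ i), ∑ s : Fin (κ j), ((L ^ t) ⟨i, r⟩ ⟨j, s⟩) ^ 2
        = ∑ l, ∑ m, lam l ^ t * lam m ^ t
            * (∑ r : Fin (κ i), v m ⟨i, r⟩ * v l ⟨i, r⟩)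
            * (∑ s : Fin (κ j), v l ⟨j, s⟩ * v m ⟨j, s⟩)) ∧
      (∑ r : Fin (κ i), ∑ s : Fin (κ j), ((L ^ t) ⟨i, r⟩ ⟨j, s⟩) ^ 2
        = ∑ lm : Fin N × Fin N, V i lm * V j lm) :=
  stmt2_general n κ N L lam hlam v hortho hspec t ht V hV
end
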